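/- arXiv:0705.4372 — 7 statements merged into one kernel-verified Lean document; each statement's English description precedes it below -/
import Mathlib

section
/- Let N be a natural number with N ≥ 4 and let κ > 0. There exist no real numbers α, δ, σ, ρ with ρ ≠ 0 such that simultaneously σ = α·ρ, σ = (2−α−δ)·ρ, δ = ((N−4)/(N−3))·(1−α), and κσ² = (N−2)(1−α²)/(N−3). (Equivalently: the class of orthogonal-symmetric scalar field solutions generated from vacuum seeds with nonzero cosmological constant is empty.) -/
/-- there are no orthogonal-symmetric scalar field solutions generated
from vacuum seeds with nonzero cosmological constant: the constraint system
σ = αρ, σ = (2−α−δ)ρ, δ = ((N−4)/(N−3))(1−α), κσ² = (N−2)(1−α²)/(N−3)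
has no solution with ρ ≠ 0. -/
theorem stmt_2 (N : ℕ) (hN : 4 ≤ N) (κ : ℝ) (hκ : 0 < κ) :
    ¬ ∃ α δ σ ρ : ℝ, ρ ≠ 0 ∧
      σ = α * ρ ∧
      σ = (2 - α - δ) * ρ ∧
      δ = (((N : ℝ) - 4) / ((N : ℝ) - 3)) * (1 - α) ∧
      κ * σ ^ 2 = ((N : ℝ) - 2) * (1 - α ^ 2) / ((N : ℝ) - 3) := by
  rintro ⟨α, δ, σ, ρ, hρ, h1, h2, h3, h4⟩
  have hn : (4 : ℝ) ≤ (N : ℝ) := by exact_mod_cast hN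
  have h3ne : (N : ℝ) - 3 ≠ 0 := by linarith
  -- α = 2 - α - δ
  have hαδ : α = 2 - α - δ := by
    have := h1.symm.trans h2
    exact mul_right_cancel₀ hρ this
  have hδ : δ = 2 - 2 * α := by linarith
  -- from h3: (2 - 2α)(N-3) = (N-4)(1-α)
  have hα1 : α = 1 := by
    have h3' : δ * ((N : ℝ) - 3) = ((N : ℝ) - 4) * (1 - α) := by
      rw [h3]; field_simp
    rw [hδ] at h3'
    have : (1 - α) * ((N : ℝ) - 2) = 0 := by nlinarith
    have h2ne : (N : ℝ) - 2 ≠ 0 := by linarith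
    have := mul_eq_zero.mp this
    rcases this with h | h
    · linarith
    · exact absurd h h2ne
  -- then κ σ² = 0 so σ = 0
  have hσ0 : σ = 0 := by
    rw [hα1] at h4
    have : κ * σ ^ 2 = 0 := by rw [h4]; norm_num
    have := (mul_eq_zero.mp this).resolve_left (ne_of_gt hκ)
    exact pow_eq_zero_iff (n := 2) (by norm_num) |>.mp this
  rw [hα1, one_mul] at h1
  exact hρ (h1 ▸ hσ0)
end

section
/- Let N be a natural number with N ≥ 4 and κ > 0. Real numbers (α, δ, σ, ρ, k) satisfy the full constraint system δ = ((N−4)/(N−3))·(1−α), κσ² = (N−2)(1−α²)/(N−3), (N−2)α = κρσ, k = κρ/(N−2), σ = (2−α−δ)·ρ, and 1 − 2α − δ = 0 if and only if there exists ε ∈ {−1, 1} such that α = 1/(N−2), δ = (N−4)/(N−2), σ = ε·√((N−1)/(κ(N−2))), ρ = ε·√((N−2)/(κ(N−1))), and k = ε·√(κ/((N−1)(N−2))). -/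
/-- the full constraint system for conformally y-inflated solutions
with nonvanishing potential from a seed with Λ ≠ 0 holds iff the parameters take
the two explicit values indexed by a sign ε = ±1. -/
theorem stmt_4 (N : ℕ) (hN : 4 ≤ N) (κ : ℝ) (hκ : 0 < κ) (α δ σ ρ k : ℝ) :
    (δ = (((N : ℝ) - 4) / ((N : ℝ) - 3)) * (1 - α) ∧
     κ * σ ^ 2 = ((N : ℝ) - 2) * (1 - α ^ 2) / ((N : ℝ) - 3) ∧
     ((N : ℝ) - 2) * α = κ * ρ * σ ∧
     k = κ * ρ / ((N : ℝ) - 2) ∧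
     σ = (2 - α - δ) * ρ ∧
     1 - 2 * α - δ = 0)
    ↔ ∃ ε : ℝ, (ε = -1 ∨ ε = 1) ∧
        α = 1 / ((N : ℝ) - 2) ∧
        δ = ((N : ℝ) - 4) / ((N : ℝ) - 2) ∧
        σ = ε * Real.sqrt (((N : ℝ) - 1) / (κ * ((N : ℝ) - 2))) ∧
        ρ = ε * Real.sqrt (((N : ℝ) - 2) / (κ * ((N : ℝ) - 1))) ∧
        k = ε * Real.sqrt (κ / (((N : ℝ) - 1) * ((N : ℝ) - 2))) := by
  have hN4 : (4:ℝ) ≤ (N:ℝ) := by exact_mod_cast hN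
  set n : ℝ := (N:ℝ) with hn
  have h3 : (0:ℝ) < n - 3 := by linarith
  have h2 : (0:ℝ) < n - 2 := by linarith
  have h1 : (0:ℝ) < n - 1 := by linarith
  set a := Real.sqrt κ with hadef
  set b := Real.sqrt (n-1) with hbdef
  set c := Real.sqrt (n-2) with hcdef
  have ha : a^2 = κ := Real.sq_sqrt hκ.le
  have hb : b^2 = n-1 := Real.sq_sqrt h1.le
  have hc : c^2 = n-2 := Real.sq_sqrt h2.le
  have hap : 0 < a := Real.sqrt_pos.mpr hκ
  have hbp : 0 < b := Real.sqrt_pos.mpr h1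
  have hcp : 0 < c := Real.sqrt_pos.mpr h2
  have hs1 : Real.sqrt ((n-1)/(κ*(n-2))) = b/(a*c) := by
    rw [Real.sqrt_div h1.le, Real.sqrt_mul hκ.le]
  have hs2 : Real.sqrt ((n-2)/(κ*(n-1))) = c/(a*b) := by
    rw [Real.sqrt_div h2.le, Real.sqrt_mul hκ.le]
  have hs3 : Real.sqrt (κ/((n-1)*(n-2))) = a/(b*c) := by
    rw [Real.sqrt_div hκ.le, Real.sqrt_mul h1.le]
  rw [hs1, hs2, hs3]
  set S := b/(a*c) with hSdef
  set R := c/(a*b) with hRdef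
  set K := a/(b*c) with hKdef
  have hSpos : 0 < S := by rw [hSdef]; positivity
  have hRpos : 0 < R := by rw [hRdef]; positivity
  have hKpos : 0 < K := by rw [hKdef]; positivity
  have hcancel : ∀ x : ℝ, x * (n-2) = 0 → x = 0 := by
    intro x hx
    rcases mul_eq_zero.mp hx with h | h
    · exact h
    · exact absurd h h2.ne'
  -- key numeric identities
  have hS2 : κ * S^2 * (n-2) = n-1 := by
    rw [hSdef, div_pow, mul_pow, ha, hb, hc]; field_simp
  have hRS : κ * R * S = 1 := by
    rw [hSdef, hRdef, ← ha]; field_simp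
  have hK2 : K * (n-2) = κ * R := by
    rw [hKdef, hRdef, ← ha, ← hc]; field_simp
  have hSR : S * (n-2) = (n-1) * R := by
    rw [hSdef, hRdef, ← hb, ← hc]; field_simp
  constructor
  · rintro ⟨e1, e2, e3, e4, e5, e6⟩
    have e1' : δ * (n-3) = (n-4) * (1-α) := by
      rw [e1]; field_simp
    have e2' : κ * σ^2 * (n-3) = (n-2) * (1-α^2) := by
      rw [e2]; field_simp
    have hα1 : α * (n-2) = 1 := by
      linear_combination -e1' - (n-3) * e6
    have hα : α = 1/(n-2) := by
      rw [eq_div_iff h2.ne']; linear_combination hα1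
    have hδ : δ = (n-4)/(n-2) := by
      rw [eq_div_iff h2.ne']; linear_combination -(n-2)*e6 - 2*hα1
    have hσ2' : (σ^2 * (κ*(n-2)) - (n-1)) * ((n-3)*(n-2)) = 0 := by
      linear_combination ((n-2)^2) * e2' - ((n-2)*(α*(n-2)+1)) * hα1
    have hσ2 : σ^2 * (κ*(n-2)) = n-1 := by
      rcases mul_eq_zero.mp hσ2' with h | h
      · linarith
      · exact absurd h (by positivity)
    have h31 : κ * ρ * σ = 1 := by
      rw [← e3]; linear_combination hα1
    have key0 : ((σ - S) * (σ + S)) * (κ*(n-2)) = 0 := by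
      linear_combination hσ2 - hS2
    have key : (σ - S) * (σ + S) = 0 := by
      rcases mul_eq_zero.mp key0 with h | h
      · exact h
      · exact absurd h (by positivity)
    rcases mul_eq_zero.mp key with hcase | hcase
    · -- σ = S, ε = 1
      have hσ : σ = S := by linarith
      have h31' : κ * ρ * S = 1 := by linear_combination h31 - (κ*ρ) * hσ
      have hz : (ρ - R) * (κ * S) = 0 := by linear_combination h31' - hRS
      have hρ : ρ = R := by
        rcases mul_eq_zero.mp hz with h | h
        · linarith
        · exact absurd h (by positivity)
      have hk' : k * (n-2) = κ * ρ := by rw [e4]; field_simp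
      have hk : k = K := by
        have hz2 : (k - K) * (n-2) = 0 := by
          linear_combination hk' - hK2 + κ * hρ
        have := hcancel _ hz2; linarith
      exact ⟨1, Or.inr rfl, hα, hδ, by rw [one_mul]; exact hσ,
        by rw [one_mul]; exact hρ, by rw [one_mul]; exact hk⟩
    · -- σ = -S, ε = -1
      have hσ : σ = -S := by linarith
      have h31' : κ * ρ * S = -1 := by linear_combination (κ*ρ) * hσ - h31
      have hz : (ρ + R) * (κ * S) = 0 := by linear_combination h31' + hRS
      have hρ : ρ = -R := by
        rcases mul_eq_zero.mp hz with h | h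
        · linarith
        · exact absurd h (by positivity)
      have hk' : k * (n-2) = κ * ρ := by rw [e4]; field_simp
      have hk : k = -K := by
        have hz2 : (k + K) * (n-2) = 0 := by
          linear_combination hk' + hK2 + κ * hρ
        have := hcancel _ hz2; linarith
      exact ⟨-1, Or.inl rfl, hα, hδ, by rw [hσ]; ring,
        by rw [hρ]; ring, by rw [hk]; ring⟩
  · rintro ⟨ε, hε, hα, hδ, hσ, hρ, hk⟩
    have hε2 : ε^2 = 1 := by rcases hε with rfl | rfl <;> norm_num
    subst hα hδ hσ hρ hk
    refine ⟨by field_simp; ring, ?_, ?_, ?_, ?_, by field_simp; ring⟩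
    · -- κ σ² equation
      have lhs : κ * (ε*S)^2 = (n-1)/(n-2) := by
        rw [eq_div_iff h2.ne']
        linear_combination hS2 + (κ*S^2*(n-2)) * hε2
      rw [lhs]
      field_simp; ring
    · -- (n-2)α = κρσ
      rw [mul_one_div, div_self h2.ne']
      linear_combination -ε^2 * hRS - hε2
    · -- k equation
      rw [eq_div_iff h2.ne']
      linear_combination ε * hK2
    · -- σ = (2-α-δ)ρ
      have h5 : 2 - 1/(n-2) - (n-4)/(n-2) = (n-1)/(n-2) := by
        field_simp; ring
      rw [h5, div_mul_eq_mul_div, eq_div_iff h2.ne']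
      linear_combination ε * hSR
end

section
/- Let N be a natural number with N ≥ 3, κ > 0, and ρ a real number. Suppose μ is a twice differentiable real-valued function on an open interval I ⊆ ℝ satisfying both μ″(y) + (N−2)·μ′(y)² = 0 and μ″(y) + (κρ²/(N−1))·μ′(y)² = 0 for all y ∈ I, and suppose μ′(y₀) ≠ 0 for some y₀ ∈ I. Then κρ² = (N−1)(N−2). -/
/-- if μ satisfies both ODEs μ″ + (N−2)(μ′)² = 0 and
μ″ + (κρ²/(N−1))(μ′)² = 0 on an open interval and μ′ is somewhere nonzero,
then κρ² = (N−1)(N−2). -/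
theorem stmt_5 (N : ℕ) (hN : 3 ≤ N) (κ ρ : ℝ) (hκ : 0 < κ)
    (I : Set ℝ) (hI : IsOpen I) (hconn : I.OrdConnected)
    (μ μ' μ'' : ℝ → ℝ)
    (hd1 : ∀ y ∈ I, HasDerivAt μ (μ' y) y)
    (hd2 : ∀ y ∈ I, HasDerivAt μ' (μ'' y) y)
    (heq1 : ∀ y ∈ I, μ'' y + ((N : ℝ) - 2) * (μ' y) ^ 2 = 0)
    (heq2 : ∀ y ∈ I, μ'' y + (κ * ρ ^ 2 / ((N : ℝ) - 1)) * (μ' y) ^ 2 = 0)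
    (y₀ : ℝ) (hy₀ : y₀ ∈ I) (hμ' : μ' y₀ ≠ 0) :
    κ * ρ ^ 2 = ((N : ℝ) - 1) * ((N : ℝ) - 2) := by
  have h1 := heq1 y₀ hy₀
  have h2 := heq2 y₀ hy₀
  have hsq : (μ' y₀) ^ 2 ≠ 0 := pow_ne_zero _ hμ'
  have hN1 : (N : ℝ) - 1 ≠ 0 := by
    have : (3 : ℝ) ≤ N := by exact_mod_cast hN
    linarith
  have hdiv : κ * ρ ^ 2 / ((N : ℝ) - 1) = (N : ℝ) - 2 := by
    have := sub_eq_zero.mpr (h2.trans h1.symm)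
    have h3 : (κ * ρ ^ 2 / ((N : ℝ) - 1) - ((N : ℝ) - 2)) * (μ' y₀) ^ 2 = 0 := by
      ring_nf; ring_nf at this; linarith
    rcases mul_eq_zero.mp h3 with h | h
    · linarith [sub_eq_zero.mp h]
    · exact absurd h hsq
  field_simp at hdiv
  linarith
end

section
/- Let λ, η, y₀ be real numbers with η > 0 and λ² ≠ 1, and set χ = 0. Then the function μ(y) = (1/(λ²−1))·ln((1−λ²)·√η·(y−y₀)), defined on the set of y with (1−λ²)·(y−y₀) > 0, satisfies on that set both (E1): μ″(y) − (1−λ²)·μ′(y)² = (1−λ²)·χ and (E2): μ′(y)² = η·exp(2(1−λ²)·μ(y)) − χ. -/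
/-!
On either side of `y₀` the function `μ y = c · log (b (y - y₀))` has `μ' = c / (y - y₀)` and
`μ'' = -c / (y - y₀)²`, while `exp (2 k μ) = (b (y - y₀))⁻²` as soon as `k c = -1`. Both equations
then reduce to identities between multiples of `(y - y₀)⁻²`: (E1) holds exactly when `k c = -1`,
and (E2) when moreover `c² b² = η`. For `c = 1/(λ² - 1)`, `b = (1 - λ²) √η` and `k = 1 - λ²` both
conditions hold.
-/

open Real Filter Topology

section LogAffine

variable {b y₀ y : ℝ}

theorem hasDerivAt_log_mul_sub (hb : b ≠ 0) (hy : y ≠ y₀) :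
    HasDerivAt (fun y => log (b * (y - y₀))) (y - y₀)⁻¹ y := by
  have hy' := sub_ne_zero.mpr hy
  convert (((hasDerivAt_id' y).sub_const y₀).const_mul b).log (mul_ne_zero hb hy') using 1
  field_simp

theorem deriv_log_mul_sub_eventuallyEq (hb : b ≠ 0) (hy : y ≠ y₀) :
    deriv (fun y => log (b * (y - y₀))) =ᶠ[𝓝 y] fun z => (z - y₀)⁻¹ := by
  filter_upwards [isOpen_ne.mem_nhds hy] with z hz
  exact (hasDerivAt_log_mul_sub hb hz).deriv

theorem deriv_const_mul_log_mul_sub (c : ℝ) (hb : b ≠ 0) (hy : y ≠ y₀) :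
    deriv (fun y => c * log (b * (y - y₀))) y = c * (y - y₀)⁻¹ := by
  rw [deriv_const_mul_field']
  exact congrArg (c * ·) (hasDerivAt_log_mul_sub hb hy).deriv

theorem deriv_deriv_const_mul_log_mul_sub (c : ℝ) (hb : b ≠ 0) (hy : y ≠ y₀) :
    deriv (deriv fun y => c * log (b * (y - y₀))) y = -c / (y - y₀) ^ 2 := by
  have hinv : HasDerivAt (fun z => (z - y₀)⁻¹) (-1 / (y - y₀) ^ 2) y := by
    simpa using ((hasDerivAt_id' y).sub_const y₀).fun_inv (sub_ne_zero.mpr hy)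
  rw [deriv_const_mul_field', deriv_const_mul_field']
  beta_reduce
  rw [(deriv_log_mul_sub_eventuallyEq hb hy).deriv_eq, hinv.deriv]
  ring

end LogAffine

theorem exp_neg_two_mul_log {x : ℝ} (hx : x ≠ 0) : exp (-(2 * log x)) = (x ^ 2)⁻¹ := by
  rw [exp_neg, two_mul, exp_add, exp_log_eq_abs hx, abs_mul_abs_self, sq]

section ConformalFactor

variable {k c b y₀ y : ℝ}

theorem const_mul_log_mul_sub_solves_E1 (hkc : k * c = -1) (hb : b ≠ 0) (hy : y ≠ y₀) :
    deriv (deriv fun y => c * log (b * (y - y₀))) y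
      - k * (deriv (fun y => c * log (b * (y - y₀))) y) ^ 2 = 0 := by
  rw [deriv_deriv_const_mul_log_mul_sub c hb hy, deriv_const_mul_log_mul_sub c hb hy]
  field_simp [sub_ne_zero.mpr hy]
  linear_combination (-c) * hkc

theorem const_mul_log_mul_sub_solves_E2 {η : ℝ} (hkc : k * c = -1) (hcb : c ^ 2 * b ^ 2 = η)
    (hb : b ≠ 0) (hy : y ≠ y₀) :
    (deriv (fun y => c * log (b * (y - y₀))) y) ^ 2
      = η * exp (2 * k * (c * log (b * (y - y₀)))) := by
  have hexp : 2 * k * (c * log (b * (y - y₀))) = -(2 * log (b * (y - y₀))) := by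
    linear_combination 2 * log (b * (y - y₀)) * hkc
  rw [deriv_const_mul_log_mul_sub c hb hy, hexp,
    exp_neg_two_mul_log (mul_ne_zero hb (sub_ne_zero.mpr hy)), ← hcb]
  field_simp [sub_ne_zero.mpr hy]

end ConformalFactor

/-- for η > 0, λ² ≠ 1 and χ = 0, the function
μ(y) = (1/(λ²−1))·ln((1−λ²)·√η·(y−y₀)) solves both
(E1): μ″ − (1−λ²)(μ′)² = (1−λ²)χ and (E2): (μ′)² = η·e^{2(1−λ²)μ} − χ
on the set where (1−λ²)(y−y₀) > 0. -/
theorem stmt_11 (lam η y₀ : ℝ) (hη : 0 < η) (hlam : lam ^ 2 ≠ 1)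
    (χ : ℝ) (hχ : χ = 0)
    (μ : ℝ → ℝ)
    (hμ : μ = fun y => (1 / (lam ^ 2 - 1)) *
      Real.log ((1 - lam ^ 2) * Real.sqrt η * (y - y₀))) :
    ∀ y : ℝ, (1 - lam ^ 2) * (y - y₀) > 0 →
      (deriv (deriv μ) y - (1 - lam ^ 2) * (deriv μ y) ^ 2 = (1 - lam ^ 2) * χ) ∧
      ((deriv μ y) ^ 2 = η * Real.exp (2 * (1 - lam ^ 2) * μ y) - χ) := by
  subst hχ hμ
  intro y hy
  have hk : 1 - lam ^ 2 ≠ 0 := sub_ne_zero.mpr (Ne.symm hlam)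
  have hk' : lam ^ 2 - 1 ≠ 0 := sub_ne_zero.mpr hlam
  have hy₀ : y ≠ y₀ := sub_ne_zero.mp (right_ne_zero_of_mul hy.ne')
  have hb : (1 - lam ^ 2) * √η ≠ 0 := mul_ne_zero hk (sqrt_pos.mpr hη).ne'
  have hkc : (1 - lam ^ 2) * (1 / (lam ^ 2 - 1)) = -1 := by
    field_simp; ring
  have hcb : (1 / (lam ^ 2 - 1)) ^ 2 * ((1 - lam ^ 2) * √η) ^ 2 = η := by
    rw [mul_pow, sq_sqrt hη.le]; field_simp; ring
  refine ⟨?_, ?_⟩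
  · simpa using const_mul_log_mul_sub_solves_E1 hkc hb hy₀
  · simpa using const_mul_log_mul_sub_solves_E2 hkc hcb hb hy₀
end

section
/- Let λ, η, χ, y₀ be real numbers with η > 0, χ < 0, and λ² ≠ 1, and set u(y) = (1−λ²)·√(−χ)·(y−y₀). Then the function μ(y) = (1/(λ²−1))·ln(√(η/(−χ))·sinh(u(y))), defined on the set of y with sinh(u(y)) > 0, satisfies on that set both (E1): μ″(y) − (1−λ²)·μ′(y)² = (1−λ²)·χ and (E2): μ′(y)² = η·exp(2(1−λ²)·μ(y)) − χ. -/
/-!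
Write `k = 1 - λ²`, `s = √(-χ)`, `A = √(η / (-χ))`, so that `μ = -(1/k) log (A sinh u)` with
`u' = k s`. Then `μ' = -s coth u` and `μ'' = k s² / sinh² u`, and since `e^{2kμ} = (A sinh u)⁻²`
and `A² s² = η`, both (E1) and (E2) reduce to `cosh² u - sinh² u = 1`.
-/

open Real Filter Topology

noncomputable def logSinh (c A b y₀ y : ℝ) : ℝ := c * log (A * sinh (b * (y - y₀)))

section LogSinh

variable (c A b y₀ : ℝ)

theorem hasDerivAt_mul_sub_const (y : ℝ) : HasDerivAt (fun y => b * (y - y₀)) b y := by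
  simpa using ((hasDerivAt_id y).sub_const y₀).const_mul b

theorem hasDerivAt_logSinh {y : ℝ} (hA : 0 < A) (hy : 0 < sinh (b * (y - y₀))) :
    HasDerivAt (logSinh c A b y₀) (c * b * (cosh (b * (y - y₀)) / sinh (b * (y - y₀)))) y := by
  have hlin := hasDerivAt_mul_sub_const b y₀ y
  refine ((hlin.sinh.const_mul A).log (mul_pos hA hy).ne' |>.const_mul c).congr_deriv ?_
  field_simp

theorem hasDerivAt_cosh_div_sinh {y : ℝ} (hy : sinh (b * (y - y₀)) ≠ 0) :
    HasDerivAt (fun y => cosh (b * (y - y₀)) / sinh (b * (y - y₀)))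
      (-b / sinh (b * (y - y₀)) ^ 2) y := by
  have hlin := hasDerivAt_mul_sub_const b y₀ y
  refine (hlin.cosh.div hlin.sinh hy).congr_deriv ?_
  field_simp
  linear_combination (-b) * Real.cosh_sq_sub_sinh_sq (b * (y - y₀))

theorem deriv_deriv_logSinh {y : ℝ} (hA : 0 < A) (hy : 0 < sinh (b * (y - y₀))) :
    deriv (deriv (logSinh c A b y₀)) y = -(c * b ^ 2) / sinh (b * (y - y₀)) ^ 2 := by
  have hderiv : deriv (logSinh c A b y₀) =ᶠ[𝓝 y]
      fun y => c * b * (cosh (b * (y - y₀)) / sinh (b * (y - y₀))) := by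
    have hopen : IsOpen {y | 0 < sinh (b * (y - y₀))} := isOpen_lt continuous_const (by fun_prop)
    filter_upwards [hopen.mem_nhds hy] with z hz
    exact (hasDerivAt_logSinh c A b y₀ hA hz).deriv
  rw [hderiv.deriv_eq, ((hasDerivAt_cosh_div_sinh b y₀ hy.ne').const_mul (c * b)).deriv]
  ring

theorem exp_mul_logSinh {r y : ℝ} (hrc : r * c = -2) (hy : 0 < A * sinh (b * (y - y₀))) :
    exp (r * logSinh c A b y₀ y) = ((A * sinh (b * (y - y₀))) ^ 2)⁻¹ := by
  rw [logSinh, ← mul_assoc, hrc, neg_mul, exp_neg, two_mul, exp_add, exp_log hy, sq]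

end LogSinh

theorem logSinh_ode (lam s A y₀ y : ℝ) (hlam : lam ^ 2 ≠ 1) (hA : 0 < A)
    (hy : 0 < sinh ((1 - lam ^ 2) * s * (y - y₀))) (μ : ℝ → ℝ)
    (hμ : μ = logSinh (1 / (lam ^ 2 - 1)) A ((1 - lam ^ 2) * s) y₀) :
    (deriv (deriv μ) y - (1 - lam ^ 2) * deriv μ y ^ 2 = -((1 - lam ^ 2) * s ^ 2)) ∧
      deriv μ y ^ 2 = (A * s) ^ 2 * exp (2 * (1 - lam ^ 2) * μ y) + s ^ 2 := by
  subst hμ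
  have hk : lam ^ 2 - 1 ≠ 0 := sub_ne_zero.2 hlam
  have hd1 := (hasDerivAt_logSinh (1 / (lam ^ 2 - 1)) A ((1 - lam ^ 2) * s) y₀ hA hy).deriv
  have hd2 := deriv_deriv_logSinh (1 / (lam ^ 2 - 1)) A ((1 - lam ^ 2) * s) y₀ hA hy
  have hexp := exp_mul_logSinh (1 / (lam ^ 2 - 1)) A ((1 - lam ^ 2) * s) y₀
    (r := 2 * (1 - lam ^ 2)) (by field_simp; ring) (mul_pos hA hy)
  have hcosh := Real.cosh_sq_sub_sinh_sq ((1 - lam ^ 2) * s * (y - y₀))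
  constructor
  · rw [hd1, hd2]
    field_simp
    linear_combination (1 - lam ^ 2) * s ^ 2 * (lam ^ 2 - 1) * hcosh
  · rw [hd1, hexp]
    field_simp
    linear_combination s ^ 2 * (lam ^ 2 - 1) ^ 2 * hcosh

/-- for η > 0, χ < 0, λ² ≠ 1 and u(y) = (1−λ²)·√(−χ)·(y−y₀),
the function μ(y) = (1/(λ²−1))·ln(√(η/(−χ))·sinh u(y)) solves both
(E1): μ″ − (1−λ²)(μ′)² = (1−λ²)χ and (E2): (μ′)² = η·e^{2(1−λ²)μ} − χ
on the set where sinh u(y) > 0. -/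
theorem stmt_13 (lam η χ y₀ : ℝ) (hη : 0 < η) (hχ : χ < 0) (hlam : lam ^ 2 ≠ 1)
    (u : ℝ → ℝ) (hu : u = fun y => (1 - lam ^ 2) * Real.sqrt (-χ) * (y - y₀))
    (μ : ℝ → ℝ)
    (hμ : μ = fun y => (1 / (lam ^ 2 - 1)) *
      Real.log (Real.sqrt (η / (-χ)) * Real.sinh (u y))) :
    ∀ y : ℝ, Real.sinh (u y) > 0 →
      (deriv (deriv μ) y - (1 - lam ^ 2) * (deriv μ y) ^ 2 = (1 - lam ^ 2) * χ) ∧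
      ((deriv μ y) ^ 2 = η * Real.exp (2 * (1 - lam ^ 2) * μ y) - χ) := by
  intro y hy
  subst hu
  have hχ' : 0 < -χ := neg_pos.2 hχ
  have hs2 : √(-χ) ^ 2 = -χ := sq_sqrt hχ'.le
  have hA : 0 < √(η / -χ) := sqrt_pos.2 (div_pos hη hχ')
  have hAs : (√(η / -χ) * √(-χ)) ^ 2 = η := by
    rw [mul_pow, hs2, sq_sqrt (div_pos hη hχ').le, div_mul_cancel₀ η hχ'.ne']
  obtain ⟨hE1, hE2⟩ := logSinh_ode lam √(-χ) √(η / -χ) y₀ y hlam hA hy μ hμ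
  constructor
  · rw [hE1, hs2]
    ring
  · rw [hE2, hAs, hs2]
    ring
end

section
/- Let κ > 0 and let F, K : ℝ → ℝ be functions such that K is twice differentiable with K″(V) = 0 for all V, F is differentiable with continuous derivative, and κ·F′(V)² + 2·K′(V)² = 2 for all V ∈ ℝ. Then there exist constants α ∈ [−1, 1], σ, K₀, F₀ ∈ ℝ with σ² = (2/κ)·(1−α²) such that K(V) = α·V + K₀ and F(V) = σ·V + F₀ for all V. -/
/-!
`K″ = 0` makes `K′` a constant `α`, and then the constraint makes `F′²` constant. A derivative
has the intermediate value property (Darboux), so `F′`, taking only the values `±σ`, is constant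
too. Both functions are therefore affine, and evaluating the constraint once gives the relation
between `α` and `σ`.
-/

theorem eq_mul_add_of_hasDerivAt_const {f : ℝ → ℝ} {c : ℝ}
    (hf : ∀ x, HasDerivAt f c x) (x : ℝ) : f x = c * x + f 0 := by
  have hg : ∀ y, HasDerivAt (fun y => f y - c * y) 0 y := fun y => by
    simpa using (hf y).fun_sub ((hasDerivAt_id y).const_mul c)
  have := is_const_of_deriv_eq_zero (fun y => (hg y).differentiableAt) (fun y => (hg y).deriv) x 0
  simp only [mul_zero, sub_zero] at this
  linear_combination this

theorem eq_of_hasDerivAt_of_sq_eq {f f' : ℝ → ℝ} {c : ℝ} (hf : ∀ x, HasDerivAt f (f' x) x)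
    (hsq : ∀ x, f' x ^ 2 = c ^ 2) (x y : ℝ) : f' x = f' y := by
  by_contra hne
  have hneg : f' y = -f' x :=
    ((sq_eq_sq_iff_eq_or_eq_neg).1 ((hsq y).trans (hsq x).symm)).resolve_left (Ne.symm hne)
  have hrange : (Set.range f').OrdConnected := by
    simpa [Set.image_univ] using
      Set.ordConnected_univ.image_hasDerivWithinAt (fun x _ => (hf x).hasDerivWithinAt)
  have hzero : (0 : ℝ) ∈ Set.uIcc (f' x) (f' y) := by
    rw [hneg, Set.mem_uIcc]
    rcases le_total 0 (f' x) with h | h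
    · exact Or.inr ⟨by linarith, h⟩
    · exact Or.inl ⟨h, by linarith⟩
  obtain ⟨w, hw⟩ := hrange.uIcc_subset (Set.mem_range_self x) (Set.mem_range_self y) hzero
  have hc : c ^ 2 = 0 := by rw [← hsq w, hw, sq, zero_mul]
  have hx : f' x = 0 := pow_eq_zero_iff two_ne_zero |>.1 ((hsq x).trans hc)
  exact hne (by rw [hneg, hx, neg_zero])

theorem stmt_14_general (κ : ℝ) (hκ : 0 < κ) (F K F' K' K'' : ℝ → ℝ)
    (hK1 : ∀ V : ℝ, HasDerivAt K (K' V) V)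
    (hK2 : ∀ V : ℝ, HasDerivAt K' (K'' V) V)
    (hK'' : ∀ V : ℝ, K'' V = 0)
    (hF1 : ∀ V : ℝ, HasDerivAt F (F' V) V)
    (hcon : ∀ V : ℝ, κ * (F' V) ^ 2 + 2 * (K' V) ^ 2 = 2) :
    ∃ α σ K₀ F₀ : ℝ, α ∈ Set.Icc (-1 : ℝ) 1 ∧
      σ ^ 2 = (2 / κ) * (1 - α ^ 2) ∧
      (∀ V : ℝ, K V = α * V + K₀) ∧
      (∀ V : ℝ, F V = σ * V + F₀) := by
  have hK' : ∀ V, K' V = K' 0 := fun V => by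
    simpa using eq_mul_add_of_hasDerivAt_const (c := 0) (fun V => hK'' V ▸ hK2 V) V
  have hF'sq : ∀ V, F' V ^ 2 = F' 0 ^ 2 := fun V => by
    have := (hcon V).trans (hcon 0).symm
    rw [hK' V] at this
    exact mul_left_cancel₀ hκ.ne' (by linarith)
  have hF' : ∀ V, F' V = F' 0 := fun V => eq_of_hasDerivAt_of_sq_eq hF1 hF'sq V 0
  have h0 := hcon 0
  refine ⟨K' 0, F' 0, K 0, F 0, ⟨?_, ?_⟩, ?_, ?_, ?_⟩
  · nlinarith [mul_nonneg hκ.le (sq_nonneg (F' 0))]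
  · nlinarith [mul_nonneg hκ.le (sq_nonneg (F' 0))]
  · field_simp
    linarith
  · exact eq_mul_add_of_hasDerivAt_const fun V => hK' V ▸ hK1 V
  · exact eq_mul_add_of_hasDerivAt_const fun V => hF' V ▸ hF1 V

/-- the Buchdahl functional constraints K″ = 0 and
κF′² + 2K′² = 2 force K and F to be affine, K(V) = αV + K₀ and F(V) = σV + F₀,
with α ∈ [−1,1] and σ² = (2/κ)(1−α²). -/
theorem stmt_14 (κ : ℝ) (hκ : 0 < κ) (F K F' K' K'' : ℝ → ℝ)
    (hK1 : ∀ V : ℝ, HasDerivAt K (K' V) V)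
    (hK2 : ∀ V : ℝ, HasDerivAt K' (K'' V) V)
    (hK'' : ∀ V : ℝ, K'' V = 0)
    (hF1 : ∀ V : ℝ, HasDerivAt F (F' V) V)
    (hF'cont : Continuous F')
    (hcon : ∀ V : ℝ, κ * (F' V) ^ 2 + 2 * (K' V) ^ 2 = 2) :
    ∃ α σ K₀ F₀ : ℝ, α ∈ Set.Icc (-1 : ℝ) 1 ∧
      σ ^ 2 = (2 / κ) * (1 - α ^ 2) ∧
      (∀ V : ℝ, K V = α * V + K₀) ∧
      (∀ V : ℝ, F V = σ * V + F₀) :=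
  stmt_14_general κ hκ F K F' K' K'' hK1 hK2 hK'' hF1 hcon
end

section
/- Let H₀ > 0 and c > 0 be real. For all real z and ψ with cos z + c·cos ψ ≠ 0, both of the following hold: H₀²·2c²·cos²z·(1 − cos(2z)·cos(2ψ))/(cos z + c·cos ψ)⁴ ≥ 0 and H₀²·c²·cos²ψ·sin²(2z)/(cos z + c·cos ψ)⁴ ≥ 0. That is, ρ + p_ψ ≥ 0 and ρ + p_θ = ρ + p_φ ≥ 0 everywhere on the solution spacetime. -/
/-- the null energy combinations ρ + p_ψ and ρ + p_θ = ρ + p_φ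
of the conformally coupled cosmological solution are nonnegative everywhere. -/
theorem stmt_18 (H₀ c : ℝ) (hH : 0 < H₀) (hc : 0 < c) :
    ∀ z ψ : ℝ, Real.cos z + c * Real.cos ψ ≠ 0 →
      (0 ≤ H₀ ^ 2 * (2 * c ^ 2 * Real.cos z ^ 2 *
          (1 - Real.cos (2 * z) * Real.cos (2 * ψ)))
          / (Real.cos z + c * Real.cos ψ) ^ 4) ∧
      (0 ≤ H₀ ^ 2 * (c ^ 2 * Real.cos ψ ^ 2 * Real.sin (2 * z) ^ 2)
          / (Real.cos z + c * Real.cos ψ) ^ 4) := by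
  intro z ψ h
  have hd : 0 < (Real.cos z + c * Real.cos ψ) ^ 4 := by positivity
  have h1 : Real.cos (2 * z) * Real.cos (2 * ψ) ≤ 1 := by
    have := Real.neg_one_le_cos (2 * z)
    have := Real.cos_le_one (2 * z)
    have := Real.neg_one_le_cos (2 * ψ)
    have := Real.cos_le_one (2 * ψ)
    nlinarith
  constructor
  · apply div_nonneg _ hd.le
    have : 0 ≤ 1 - Real.cos (2 * z) * Real.cos (2 * ψ) := by linarith
    positivity
  · positivity
end
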